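/- arXiv:2410.03947 — 3 statements merged into one kernel-verified Lean document; each statement's English description precedes it below -/
import Mathlib

section
/- Let n, d, a₁, a₂, m be natural numbers with a₁ ≤ d ≤ n and a₂ ≤ n − d. Then for every real number x, ∑_{j=a₁+a₂}^{n−m} C(n−j, m)·C(d−a₁, j−a₁−a₂)·x^{n−j−m} = (1/m!)·(iteratedDeriv m f)(x), where f : ℝ → ℝ is the polynomial function f(x) = x^{n−d−a₂}·(1+x)^{d−a₁} and iteratedDeriv m f denotes its m-th derivative. -/
/-! With `p = n - d - a₂` and `q = d - a₁`, the binomial theorem gives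
`xᵖ (1 + x)^q = ∑ₖ C(q, k) x^(p + q - k)`, and `(1/m!) dᵐ/dxᵐ` is the `m`-th Hasse derivative,
which sends `x^N` to `C(N, m) x^(N - m)`. Substituting `j = a₁ + a₂ + k` (so `n - j = p + q - k`)
turns this into the left-hand side: the extra terms vanish because `C(n - j, m) = 0` for
`j > n - m` and `C(q, j - a₁ - a₂) = 0` for `j > a₁ + a₂ + q`. -/

open Polynomial Finset Nat

namespace Polynomial

variable {𝕜 : Type*} [NontriviallyNormedField 𝕜]

theorem iteratedDeriv_eval (m : ℕ) (p : 𝕜[X]) :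
    iteratedDeriv m (fun y => p.eval y) = fun x => (derivative^[m] p).eval x := by
  induction m generalizing p with
  | zero => simp
  | succ k ih =>
    rw [iteratedDeriv_succ', Function.iterate_succ_apply, ← ih]
    congr
    funext y
    exact p.deriv

theorem iteratedDeriv_eval_eq_factorial_mul_hasseDeriv (m : ℕ) (p : 𝕜[X]) (x : 𝕜) :
    iteratedDeriv m (fun y => p.eval y) x = m ! * (hasseDeriv m p).eval x := by
  rw [iteratedDeriv_eval, ← factorial_smul_hasseDeriv]
  simp

variable {R : Type*} [CommSemiring R]

theorem hasseDeriv_X_pow (m N : ℕ) :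
    hasseDeriv m (X ^ N : R[X]) = N.choose m • X ^ (N - m) := by
  rw [X_pow_eq_monomial, hasseDeriv_monomial, mul_one, ← C_mul_X_pow_eq_monomial, C_eq_natCast,
    nsmul_eq_mul]

theorem X_pow_mul_one_add_X_pow (p q : ℕ) :
    (X ^ p * (1 + X) ^ q : R[X]) = ∑ k ∈ range (q + 1), q.choose k • X ^ (p + q - k) := by
  rw [add_pow, mul_sum]
  refine sum_congr rfl fun k hk => ?_
  rw [show p + q - k = p + (q - k) by have := mem_range.mp hk; omega, nsmul_eq_mul]
  ring

theorem hasseDeriv_X_pow_mul_one_add_X_pow (m p q : ℕ) :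
    hasseDeriv m (X ^ p * (1 + X) ^ q : R[X]) =
      ∑ k ∈ range (q + 1), (q.choose k * (p + q - k).choose m) • X ^ (p + q - k - m) := by
  simp only [X_pow_mul_one_add_X_pow, map_sum, map_nsmul, hasseDeriv_X_pow, smul_smul]

end Polynomial

theorem Finset.sum_Icc_choose_mul_choose {R : Type*} [Semiring R] (n s q m : ℕ) (hsq : s + q ≤ n)
    (f : ℕ → R) :
    ∑ j ∈ Icc s (n - m), ((n - j).choose m : R) * (q.choose (j - s) : R) * f (n - j - m) =
      ∑ k ∈ range (q + 1), (q.choose k : R) * ((n - s - k).choose m : R) * f (n - s - k - m) := by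
  set F : ℕ → R := fun j => ((n - j).choose m : R) * (q.choose (j - s) : R) * f (n - j - m)
  have h_top : ∑ j ∈ Icc s (n - m), F j = ∑ j ∈ Icc s n, F j := by
    refine sum_subset (Icc_subset_Icc_right tsub_le_self) fun j hj hj' => ?_
    have : (n - j).choose m = 0 := choose_eq_zero_of_lt (by grind)
    simp [F, this]
  have h_bot : ∑ j ∈ Icc s (s + q), F j = ∑ j ∈ Icc s n, F j := by
    refine sum_subset (Icc_subset_Icc_right hsq) fun j hj hj' => ?_
    have : q.choose (j - s) = 0 := choose_eq_zero_of_lt (by grind)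
    simp [F, this]
  rw [h_top, ← h_bot, ← Ico_add_one_right_eq_Icc, sum_Ico_eq_sum_range,
    show s + q + 1 - s = q + 1 by omega]
  refine sum_congr rfl fun k _ => ?_
  simp only [F, Nat.sub_sub, add_tsub_cancel_left, ← Nat.cast_mul, Nat.mul_comm]

/-- **Van den Essen type formula, auxiliary identity.**
For natural numbers `n, d, a₁, a₂, m` with `a₁ ≤ d ≤ n` and `a₂ ≤ n - d`,
and every real `x`,
`∑_{j=a₁+a₂}^{n-m} C(n-j, m) · C(d-a₁, j-a₁-a₂) · x^(n-j-m)`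
equals `(1/m!) · (d^m/dx^m) [x^(n-d-a₂) (1+x)^(d-a₁)]`. -/
theorem sum_choose_eq_iteratedDeriv_phi
    (n d a₁ a₂ m : ℕ) (h₁ : a₁ ≤ d) (h₂ : d ≤ n) (h₃ : a₂ ≤ n - d) (x : ℝ) :
    ∑ j ∈ Finset.Icc (a₁ + a₂) (n - m),
      ((n - j).choose m : ℝ) * ((d - a₁).choose (j - a₁ - a₂) : ℝ) * x ^ (n - j - m)
    = (1 / (m.factorial : ℝ)) *
        iteratedDeriv m (fun y : ℝ => y ^ (n - d - a₂) * (1 + y) ^ (d - a₁)) x := by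
  have hφ : (fun y : ℝ => y ^ (n - d - a₂) * (1 + y) ^ (d - a₁)) =
      fun y => (X ^ (n - d - a₂) * (1 + X) ^ (d - a₁) : ℝ[X]).eval y := by
    simp
  have hn : n - (a₁ + a₂) = n - d - a₂ + (d - a₁) := by omega
  simp_rw [Nat.sub_sub _ a₁ a₂]
  rw [Finset.sum_Icc_choose_mul_choose n (a₁ + a₂) (d - a₁) m (by omega), hn,
    hφ, iteratedDeriv_eval_eq_factorial_mul_hasseDeriv, hasseDeriv_X_pow_mul_one_add_X_pow]
  field_simp
  simp only [nsmul_eq_mul, cast_mul, eval_finsetSum, eval_mul, eval_natCast, eval_pow, eval_X]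
end

section
/- Let n ≥ 1 and 1 ≤ d ≤ n, let R = ℂ[x₁, …, xₙ] and let I ⊆ R be the ideal generated by x₁, …, x_d. Let P₁, …, Pₙ ∈ R and m₁, …, mₙ natural numbers with P_j ∈ I^{m_j} and P_j ∉ I^{m_j + 1} for every j. Set m' = min{m₁, …, m_d} and m = min{m₁, …, mₙ}. Then there exists an invertible n×n complex matrix A = (a_{ij}) with a_{ij} = 0 whenever i ≤ d and j > d such that, writing B = A⁻¹ and σ_B for the ℂ-algebra endomorphism of R sending x_k to ∑_l b_{kl}·x_l, the polynomials Q_i := ∑_{j=1}^{n} a_{ij}·σ_B(P_j) satisfy: Q_i ∈ I^{m'} and Q_i ∉ I^{m'+1} for 1 ≤ i ≤ d, and Q_i ∈ I^{m} and Q_i ∉ I^{m+1} for d < i ≤ n. -/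
open MvPolynomial


lemma aux_comp_id {n : ℕ} (A B : Matrix (Fin n) (Fin n) ℂ)
    (h : B * A = 1) (p : MvPolynomial (Fin n) ℂ) :
    aeval (fun k : Fin n => ∑ l : Fin n, C (A k l) * X l)
      ((aeval (fun k : Fin n => ∑ l : Fin n, C (B k l) * X l)) p) = p := by
  have hBA : ∀ i j : Fin n, (∑ l, B i l * A l j) = if i = j then 1 else 0 := by
    intro i j
    have := congrFun (congrFun h i) j
    simpa [Matrix.mul_apply, Matrix.one_apply] using this
  have hhom : (aeval (fun k : Fin n => ∑ l : Fin n, C (A k l) * X l)).comp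
      (aeval (fun k : Fin n => ∑ l : Fin n, C (B k l) * X l)) =
      AlgHom.id ℂ (MvPolynomial (Fin n) ℂ) := by
    apply MvPolynomial.algHom_ext
    intro i
    simp only [AlgHom.comp_apply, aeval_X, AlgHom.id_apply, map_sum, map_mul, aeval_C,
      MvPolynomial.algebraMap_eq, Finset.mul_sum]
    rw [Finset.sum_comm]
    have : ∀ l : Fin n, ∑ k : Fin n, C (B i k) * (C (A k l) * X l)
        = C (if i = l then 1 else 0) * X l := by
      intro l
      rw [← hBA i l]
      rw [map_sum, Finset.sum_mul]
      exact Finset.sum_congr rfl fun k _ => by rw [← mul_assoc, ← C_mul]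
    rw [Finset.sum_congr rfl fun l _ => this l]
    simp [apply_ite C, ite_mul]
  calc _ = ((aeval (fun k : Fin n => ∑ l : Fin n, C (A k l) * X l)).comp
      (aeval (fun k : Fin n => ∑ l : Fin n, C (B k l) * X l))) p := rfl
    _ = p := by rw [hhom]; rfl

lemma aux_pres {n d : ℕ} (I : Ideal (MvPolynomial (Fin n) ℂ))
    (hI : I = Ideal.span (X '' {i : Fin n | (i : ℕ) < d}))
    (M : Matrix (Fin n) (Fin n) ℂ)
    (hM : ∀ k l : Fin n, (k : ℕ) < d → d ≤ (l : ℕ) → M k l = 0)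
    (t : ℕ) (p : MvPolynomial (Fin n) ℂ) (hp : p ∈ I ^ t) :
    aeval (fun k : Fin n => ∑ l : Fin n, C (M k l) * X l) p ∈ I ^ t := by
  set σ := aeval (R := ℂ) (fun k : Fin n => ∑ l : Fin n, C (M k l) * X l)
  have hmap : Ideal.map σ I ≤ I := by
    rw [hI, Ideal.map_span, Ideal.span_le]
    rintro q ⟨_, ⟨k, hk, rfl⟩, rfl⟩
    simp only [σ, aeval_X]
    apply Ideal.sum_mem
    intro l _
    by_cases hl : (l : ℕ) < d
    · exact Ideal.mul_mem_left _ _ (Ideal.subset_span ⟨l, hl, rfl⟩)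
    · rw [hM k l hk (le_of_not_gt hl)]
      simp
  have : σ p ∈ Ideal.map σ (I ^ t) := Ideal.mem_map_of_mem σ hp
  rw [Ideal.map_pow] at this
  exact Ideal.pow_right_mono hmap t this

/-- **Normalization of multiplicities (Lemma 2.2 of the paper).**
Let `R = ℂ[x₁, …, xₙ]` (variables indexed by `Fin n`), `I = (x₁, …, x_d)`,
and let `P₁, …, Pₙ ∈ R` with `P_j ∈ I^(m_j) \ I^(m_j + 1)`. Set
`m' = min{m₁, …, m_d}` and `mmin = min{m₁, …, mₙ}`. Then there is an
invertible matrix `A` with `A i j = 0` for `i ≤ d < j` such that, with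
`B = A⁻¹` and `σ_B` the substitution `x_k ↦ ∑_l B k l · x_l`, the polynomials
`Q_i = ∑_j A i j · σ_B(P_j)` satisfy `Q_i ∈ I^(m') \ I^(m'+1)` for `i ≤ d`
and `Q_i ∈ I^(mmin) \ I^(mmin+1)` for `i > d`. -/
theorem exists_linear_change_normalizing_multiplicities
    (n d : ℕ) (hn : 1 ≤ n) (hd1 : 1 ≤ d) (hdn : d ≤ n)
    (I : Ideal (MvPolynomial (Fin n) ℂ))
    (hI : I = Ideal.span (X '' {i : Fin n | (i : ℕ) < d}))
    (P : Fin n → MvPolynomial (Fin n) ℂ) (m : Fin n → ℕ)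
    (hmem : ∀ j : Fin n, P j ∈ I ^ (m j))
    (hnmem : ∀ j : Fin n, P j ∉ I ^ (m j + 1))
    (m' mmin : ℕ)
    (hm'le : ∀ i : Fin n, (i : ℕ) < d → m' ≤ m i)
    (hm'ex : ∃ i : Fin n, (i : ℕ) < d ∧ m i = m')
    (hminle : ∀ i : Fin n, mmin ≤ m i)
    (hminex : ∃ i : Fin n, m i = mmin) :
    ∃ A : Matrix (Fin n) (Fin n) ℂ, IsUnit A ∧
      (∀ i j : Fin n, (i : ℕ) < d → d ≤ (j : ℕ) → A i j = 0) ∧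
      (∀ i : Fin n,
        ((i : ℕ) < d →
          (∑ j : Fin n, C (A i j) *
              (aeval (fun k : Fin n => ∑ l : Fin n, C (A⁻¹ k l) * X l)) (P j)) ∈ I ^ m' ∧
          (∑ j : Fin n, C (A i j) *
              (aeval (fun k : Fin n => ∑ l : Fin n, C (A⁻¹ k l) * X l)) (P j)) ∉ I ^ (m' + 1)) ∧
        (d ≤ (i : ℕ) →
          (∑ j : Fin n, C (A i j) *
              (aeval (fun k : Fin n => ∑ l : Fin n, C (A⁻¹ k l) * X l)) (P j)) ∈ I ^ mmin ∧
          (∑ j : Fin n, C (A i j) *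
              (aeval (fun k : Fin n => ∑ l : Fin n, C (A⁻¹ k l) * X l)) (P j)) ∉ I ^ (mmin + 1))) := by
  classical
  obtain ⟨j0, hj0d, hj0m⟩ := hm'ex
  -- choose j1 : m j1 = mmin and (j1 = j0 ∨ d ≤ j1)
  obtain ⟨j1, hj1m, hj1loc⟩ : ∃ j1 : Fin n, m j1 = mmin ∧ (j1 = j0 ∨ d ≤ (j1 : ℕ)) := by
    obtain ⟨j, hj⟩ := hminex
    by_cases h : d ≤ (j : ℕ)
    · exact ⟨j, hj, Or.inr h⟩
    · have h1 : m' ≤ mmin := hj ▸ hm'le j (lt_of_not_ge h)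
      have h2 : mmin ≤ m' := hj0m ▸ hminle j0
      exact ⟨j0, by rw [hj0m]; exact le_antisymm h1 h2, Or.inl rfl⟩
  -- per-row target index and exponent
  set w : Fin n → Fin n := fun i => if (i : ℕ) < d then j0 else j1 with hw
  set τ : Fin n → ℕ := fun i => if (i : ℕ) < d then m' else mmin with hτ
  have hwm : ∀ i, m (w i) = τ i := by
    intro i; simp only [hw, hτ]; split <;> [exact hj0m; exact hj1m]
  -- choice of coefficients
  have hex : ∀ i : Fin n, ∃ t : ℂ, P i + C t * P (w i) ∉ I ^ (τ i + 1) := by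
    intro i
    by_cases hPi : P i ∈ I ^ (τ i + 1)
    · refine ⟨1, fun habs => ?_⟩
      have : C (1:ℂ) * P (w i) ∈ I ^ (τ i + 1) := by
        have := Ideal.sub_mem _ habs hPi
        simpa using this
      rw [map_one, one_mul] at this
      exact hnmem (w i) (by rw [hwm i]; exact this)
    · exact ⟨0, by simpa using hPi⟩
  choose c hc using hex
  set u : Fin n → ℂ := fun i => if (i : ℕ) < d ∧ i ≠ j0 then c i else 0 with hu
  set v : Fin n → ℂ := fun i => if d ≤ (i : ℕ) ∧ i ≠ j1 then c i else 0 with hv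
  set M : Matrix (Fin n) (Fin n) ℂ :=
    fun i j => (if j = j0 then u i else 0) + (if j = j1 then v i else 0) with hM
  have huj0 : u j0 = 0 := by simp [hu]
  have hvj0 : v j0 = 0 := by simp [hv, Nat.not_le.mpr hj0d]
  have huj1 : u j1 = 0 := by
    rcases hj1loc with h | h
    · rw [h]; exact huj0
    · simp [hu, Nat.not_lt.mpr h]
  have hvj1 : v j1 = 0 := by simp [hv]
  have hrow0 : ∀ k, (k = j0 ∨ k = j1) → ∀ j, M k j = 0 := by
    rintro k (rfl | rfl) j <;> simp [hM, huj0, hvj0, huj1, hvj1] <;> split <;> simp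
  have hM2 : M * M = 0 := by
    ext i j
    simp only [Matrix.mul_apply, Matrix.zero_apply]
    apply Finset.sum_eq_zero
    intro k _
    by_cases hk : k = j0 ∨ k = j1
    · rw [hrow0 k hk j, mul_zero]
    · push_neg at hk
      have : M i k = 0 := by simp [hM, hk.1, hk.2]
      rw [this, zero_mul]
  set A : Matrix (Fin n) (Fin n) ℂ := 1 + M with hA
  set B : Matrix (Fin n) (Fin n) ℂ := 1 - M with hB
  have hAB : A * B = 1 := by
    have : A * B = 1 - M * M := by rw [hA, hB]; noncomm_ring
    rw [this, hM2, sub_zero]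
  have hBA : B * A = 1 := by
    have : B * A = 1 - M * M := by rw [hA, hB]; noncomm_ring
    rw [this, hM2, sub_zero]
  have hAinv : A⁻¹ = B := Matrix.inv_eq_right_inv hAB
  have hunit : IsUnit A := ⟨⟨A, B, hAB, hBA⟩, rfl⟩
  -- block structure
  have hAblock : ∀ k l : Fin n, (k : ℕ) < d → d ≤ (l : ℕ) → A k l = 0 := by
    intro k l hk hl
    have hne : k ≠ l := fun h => absurd (h ▸ hl) (Nat.not_le.mpr (h ▸ hk))
    have h0 : l ≠ j0 := fun h => absurd (h ▸ hl) (Nat.not_le.mpr (h ▸ hj0d))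
    have hvk : v k = 0 := by simp [hv, Nat.not_le.mpr hk]
    rw [hA, Matrix.add_apply]
    simp [hM, Matrix.one_apply, hne, h0, hvk]
  have hBblock : ∀ k l : Fin n, (k : ℕ) < d → d ≤ (l : ℕ) → B k l = 0 := by
    intro k l hk hl
    have hne : k ≠ l := fun h => absurd (h ▸ hl) (Nat.not_le.mpr (h ▸ hk))
    have h0 : l ≠ j0 := fun h => absurd (h ▸ hl) (Nat.not_le.mpr (h ▸ hj0d))
    have hvk : v k = 0 := by simp [hv, Nat.not_le.mpr hk]
    rw [hB, Matrix.sub_apply]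
    simp [hM, Matrix.one_apply, hne, h0, hvk]
  refine ⟨A, hunit, hAblock, ?_⟩
  rw [hAinv]
  -- abbreviations
  set σB := aeval (R := ℂ) (fun k : Fin n => ∑ l : Fin n, C (B k l) * X l) with hσB
  set T : Fin n → MvPolynomial (Fin n) ℂ := fun i => P i + C (u i) * P j0 + C (v i) * P j1
    with hT
  have hQT : ∀ i : Fin n, (∑ j : Fin n, C (A i j) * σB (P j)) = σB (T i) := by
    intro i
    have hTsum : T i = ∑ j : Fin n, C (A i j) * P j := by
      simp only [hA, Matrix.add_apply]
      simp only [hA, hM, Matrix.add_apply, Matrix.one_apply, map_add, apply_ite C, map_zero,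
        add_mul, ite_mul, zero_mul, one_mul, Finset.sum_add_distrib, Finset.sum_ite_eq,
        Finset.sum_ite_eq', Finset.mem_univ, if_true, hT, map_one]
      ring
    rw [hTsum, map_sum]
    apply Finset.sum_congr rfl
    intro j _
    rw [map_mul]
    congr 1
    rw [hσB, aeval_C, MvPolynomial.algebraMap_eq]
  have hiff : ∀ (i : Fin n) (t : ℕ), ((∑ j : Fin n, C (A i j) * σB (P j)) ∈ I ^ t ↔ T i ∈ I ^ t) := by
    intro i t
    rw [hQT i]
    constructor
    · intro h
      have := aux_pres I hI A hAblock t _ h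
      rwa [hσB, aux_comp_id A B hBA] at this
    · intro h
      exact aux_pres I hI B hBblock t _ h
  intro i
  constructor
  · intro hid
    have hvi : v i = 0 := by simp [hv, Nat.not_le.mpr hid]
    have hTeq : T i = P i + C (u i) * P j0 := by
      simp [hT, hvi]
    have hPj0 : P j0 ∈ I ^ m' := hj0m ▸ hmem j0
    constructor
    · rw [hiff, hTeq]
      exact Ideal.add_mem _ (Ideal.pow_le_pow_right (hm'le i hid) (hmem i))
        (Ideal.mul_mem_left _ _ hPj0)
    · rw [hiff, hTeq]
      by_cases hij : i = j0
      · have hui : u i = 0 := by simp [hu, hij]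
        rw [hui, map_zero, zero_mul, add_zero, hij]
        exact fun h => hnmem j0 (by rw [hj0m]; exact h)
      · have hui : u i = c i := by simp [hu, hid, hij]
        rw [hui]
        have := hc i
        simp only [hw, hτ, hid, if_pos] at this
        exact this
  · intro hid
    have hui : u i = 0 := by simp [hu, Nat.not_lt.mpr hid]
    have hTeq : T i = P i + C (v i) * P j1 := by
      simp [hT, hui]
    have hPj1 : P j1 ∈ I ^ mmin := hj1m ▸ hmem j1
    constructor
    · rw [hiff, hTeq]
      exact Ideal.add_mem _ (Ideal.pow_le_pow_right (hminle i) (hmem i))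
        (Ideal.mul_mem_left _ _ hPj1)
    · rw [hiff, hTeq]
      by_cases hij : i = j1
      · have hvi : v i = 0 := by simp [hv, hij]
        rw [hvi, map_zero, zero_mul, add_zero, hij]
        exact fun h => hnmem j1 (by rw [hj1m]; exact h)
      · have hvi : v i = c i := by simp [hv, hid, hij]
        rw [hvi]
        have := hc i
        simp only [hw, hτ, Nat.not_lt.mpr hid, if_neg, if_false] at this
        exact this
end

section
/- Let n ≥ 3 and Λ ≥ 1 be integers, and let (ℓ_j)_{j≥1} be a sequence of positive integers which is eventually constant, i.e. there exist J ≥ 1 and an integer c ≥ 1 with ℓ_j = c for all j ≥ J. Then it is NOT the case that for every j ≥ 1 the real number a_j := (ℓ_{j+1}+1)^{n−2}·Λ·( ℓ_{j+1}²/(n−1)^{j} + (n·ℓ_{j+1}+1)·∑_{i=1}^{j} ℓ_i/(n−1)^{i} ) is an integer. -/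
/-!
Write `a_j = milnorTerm n Λ ℓ j`. Once `ℓ` is constant equal to `c`, the `ℓ_{j+1}` terms combine
neatly because `n - (n - 1) = 1`, leaving
`a_{j+1} - a_j = (c + 1)^(n-2) Λ c (2c + 1) / (n - 1)^(j+1)`.
This difference is positive but tends to `0`, so for large `j` it lies in `(0, 1)` and cannot be
a difference of two integers.
-/

open Filter Topology

noncomputable def milnorTerm (n : ℕ) (Λ : ℝ) (ℓ : ℕ → ℕ) (j : ℕ) : ℝ :=
  ((ℓ (j + 1) : ℝ) + 1) ^ (n - 2) * Λ *
    ((ℓ (j + 1) : ℝ) ^ 2 / ((n : ℝ) - 1) ^ j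
      + ((n : ℝ) * (ℓ (j + 1) : ℝ) + 1) * ∑ i ∈ Finset.Icc 1 j, (ℓ i : ℝ) / ((n : ℝ) - 1) ^ i)

theorem milnorTerm_succ_sub_of_eq {n : ℕ} (hn : n ≠ 1) (Λ : ℝ) {ℓ : ℕ → ℕ} {j c : ℕ}
    (h₁ : ℓ (j + 1) = c) (h₂ : ℓ (j + 2) = c) :
    milnorTerm n Λ ℓ (j + 1) - milnorTerm n Λ ℓ j =
      ((c : ℝ) + 1) ^ (n - 2) * Λ * c * (2 * c + 1) / ((n : ℝ) - 1) ^ (j + 1) := by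
  have hp : (n : ℝ) - 1 ≠ 0 := sub_ne_zero.2 (by exact_mod_cast hn)
  rw [milnorTerm, milnorTerm, Finset.sum_Icc_succ_top (by omega), h₁, h₂]
  field_simp
  ring

theorem intCast_sub_intCast_notMem_Ioo {R : Type*} [Ring R] [LinearOrder R]
    [IsStrictOrderedRing R] (a b : ℤ) : (a : R) - b ∉ Set.Ioo 0 1 := by
  rintro ⟨h₀, h₁⟩
  norm_cast at h₀ h₁
  omega

theorem eventually_div_pow_lt_one {p : ℝ} (hp : 1 < p) (K : ℝ) :
    ∀ᶠ j in atTop, K / p ^ j < 1 :=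
  (tendsto_const_nhds.div_atTop (tendsto_pow_atTop_atTop_of_one_lt hp)).eventually
    (gt_mem_nhds zero_lt_one)

theorem not_forall_integrality_of_eventually_constant_general
    (n : ℕ) (hn : 3 ≤ n) (Λ : ℤ) (hΛ : 1 ≤ Λ)
    (ℓ : ℕ → ℕ)
    (J : ℕ) (c : ℕ) (hc : 1 ≤ c) (hconst : ∀ j : ℕ, J ≤ j → ℓ j = c) :
    ¬ (∀ j : ℕ, 1 ≤ j → ∃ z : ℤ,
        ((ℓ (j + 1) : ℝ) + 1) ^ (n - 2) * (Λ : ℝ) *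
          ((ℓ (j + 1) : ℝ) ^ 2 / ((n : ℝ) - 1) ^ j
            + ((n : ℝ) * (ℓ (j + 1) : ℝ) + 1) *
                ∑ i ∈ Finset.Icc 1 j, (ℓ i : ℝ) / ((n : ℝ) - 1) ^ i)
        = (z : ℝ)) := by
  intro hint
  set K : ℝ := ((c : ℝ) + 1) ^ (n - 2) * Λ * c * (2 * c + 1)
  have hK : 0 < K := by
    have : (1 : ℝ) ≤ Λ := by exact_mod_cast hΛ
    have : (1 : ℝ) ≤ c := by exact_mod_cast hc
    positivity
  have hp : (1 : ℝ) < (n : ℝ) - 1 := by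
    have : (3 : ℝ) ≤ n := by exact_mod_cast hn
    linarith
  obtain ⟨j, ⟨hj₁, hjJ⟩, hsmall⟩ := ((eventually_ge_atTop 1).and (eventually_ge_atTop J) |>.and
    ((tendsto_add_atTop_nat 1).eventually (eventually_div_pow_lt_one hp K))).exists
  obtain ⟨z, hz⟩ : ∃ z : ℤ, milnorTerm n Λ ℓ j = z := hint j hj₁
  obtain ⟨z', hz'⟩ : ∃ z : ℤ, milnorTerm n Λ ℓ (j + 1) = z := hint (j + 1) (by omega)
  have hdiff := milnorTerm_succ_sub_of_eq (by omega : n ≠ 1) (Λ : ℝ) (hconst (j + 1) (by omega))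
    (hconst (j + 2) (by omega))
  rw [hz, hz'] at hdiff
  refine intCast_sub_intCast_notMem_Ioo (R := ℝ) z' z ⟨?_, ?_⟩ <;> rw [hdiff]
  · positivity
  · exact hsmall

/-- **Arithmetic core of Lemma 5.1 of the paper.**
Let `n ≥ 3` and `Λ ≥ 1` be integers, and let `(ℓ_j)_{j≥1}` be a sequence of
positive integers which is eventually constant (equal to some `c ≥ 1` from
index `J` on). Then it is NOT the case that for every `j ≥ 1` the real number
`a_j = (ℓ_{j+1}+1)^(n-2) · Λ · ( ℓ_{j+1}²/(n-1)^j + (n·ℓ_{j+1}+1)·∑_{i=1}^{j} ℓ_i/(n-1)^i )`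
is an integer. -/
theorem not_forall_integrality_of_eventually_constant
    (n : ℕ) (hn : 3 ≤ n) (Λ : ℤ) (hΛ : 1 ≤ Λ)
    (ℓ : ℕ → ℕ) (hpos : ∀ j : ℕ, 1 ≤ j → 1 ≤ ℓ j)
    (J : ℕ) (hJ : 1 ≤ J) (c : ℕ) (hc : 1 ≤ c) (hconst : ∀ j : ℕ, J ≤ j → ℓ j = c) :
    ¬ (∀ j : ℕ, 1 ≤ j → ∃ z : ℤ,
        ((ℓ (j + 1) : ℝ) + 1) ^ (n - 2) * (Λ : ℝ) *
          ((ℓ (j + 1) : ℝ) ^ 2 / ((n : ℝ) - 1) ^ j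
            + ((n : ℝ) * (ℓ (j + 1) : ℝ) + 1) *
                ∑ i ∈ Finset.Icc 1 j, (ℓ i : ℝ) / ((n : ℝ) - 1) ^ i)
        = (z : ℝ)) :=
  not_forall_integrality_of_eventually_constant_general n hn Λ hΛ ℓ J c hc hconst
end
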